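/- Fix x = 0 ∈ {0,1}^n and let C be a random k-clause with support K and specification g ∈ {0,1}^K. For y ∈ {0,1}^n with |y| ≥ (1/2 − ξ)n, the conditional probability β = Pr(C ~ y | g ≠ 1) satisfies β ≤ (1−2^{−k})·[1 + 2^{−k}(ν − 2^{−k})/(1−2^{−k})²], where ν = (1/2 + ξ)^k. -/

import Mathlib

open Finset

private lemma descFact_mul_pow_le : ∀ (k a n : ℕ), a ≤ n →
    a.descFactorial k * n ^ k ≤ n.descFactorial k * a ^ k := by
  intro k
  induction k with
  | zero => intro a n h; simp
  | succ k ih =>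
    intro a n h
    rw [Nat.descFactorial_succ, Nat.descFactorial_succ, pow_succ, pow_succ]
    have step : (a - k) * n ≤ (n - k) * a := by
      rcases le_or_gt k a with hka | hka
      · have hkn : k ≤ n := hka.trans h
        zify [hka, hkn]
        nlinarith
      · simp [Nat.sub_eq_zero_of_le hka.le]
    calc (a - k) * a.descFactorial k * (n ^ k * n)
        = ((a - k) * n) * (a.descFactorial k * n ^ k) := by ring
      _ ≤ ((n - k) * a) * (n.descFactorial k * a ^ k) :=
          Nat.mul_le_mul step (ih a n h)
      _ = (n - k) * n.descFactorial k * (a ^ k * a) := by ring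

private lemma choose_mul_pow_le {a n : ℕ} (k : ℕ) (h : a ≤ n) :
    a.choose k * n ^ k ≤ n.choose k * a ^ k := by
  have h1 := descFact_mul_pow_le k a n h
  rw [Nat.descFactorial_eq_factorial_mul_choose, Nat.descFactorial_eq_factorial_mul_choose] at h1
  rw [mul_assoc, mul_assoc] at h1
  exact Nat.le_of_mul_le_mul_left h1 (Nat.factorial_pos k)

private lemma card_forced {n : ℕ} (K : Finset (Fin n)) (f : Fin n → Bool) :
    (Finset.univ.filter (fun s : Fin n → Bool => ∀ j ∈ K, s j = f j)).card
      = 2 ^ (n - K.card) := by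
  classical
  rw [← Fintype.card_subtype]
  have e : {s : Fin n → Bool // ∀ j ∈ K, s j = f j} ≃ ({j : Fin n // j ∉ K} → Bool) :=
    { toFun := fun s j => s.1 j.1
      invFun := fun g => ⟨fun j => if h : j ∈ K then f j else g ⟨j, h⟩,
        fun j hj => by simp [hj]⟩
      left_inv := fun s => by
        ext j
        by_cases h : j ∈ K
        · simp [h, s.2 j h]
        · simp [h]
      right_inv := fun g => by
        ext j
        simp [j.2] }
  rw [Fintype.card_congr e]
  have : Fintype.card {j : Fin n // j ∉ K} = n - K.card := by
    simp [Fintype.card_subtype_compl]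
  simp [this]

private lemma card_filter_prod {α β : Type*} [Fintype α] [Fintype β]
    (p : α × β → Prop) [DecidablePred p] :
    (Finset.univ.filter p).card
      = ∑ a : α, (Finset.univ.filter (fun b => p (a, b))).card := by
  classical
  rw [← Fintype.card_subtype]
  rw [Fintype.card_congr (Equiv.subtypeProdEquivSigmaSubtype (fun a b => p (a, b)))]
  rw [Fintype.card_sigma]
  simp [Fintype.card_subtype]

private lemma card_subtype_subsets {n k : ℕ} (s : Finset (Fin n)) :
    (Finset.univ.filter fun K : {K : Finset (Fin n) // K.card = k} => K.1 ⊆ s).card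
      = s.card.choose k := by
  classical
  rw [← Finset.card_powersetCard]
  apply Finset.card_nbij (fun K => K.1)
  · intro K hK
    simp only [Finset.mem_coe, Finset.mem_filter, Finset.mem_univ, true_and] at hK
    simp [Finset.mem_powersetCard, hK, K.2]
  · intro K₁ _ K₂ _ h
    exact Subtype.ext h
  · intro S hS
    rw [Finset.mem_coe, Finset.mem_powersetCard] at hS
    exact ⟨⟨S, hS.2⟩, by simp [hS.1], rfl⟩

/-- A random `k`-clause: a uniform `k`-subset `K` with a uniform sign pattern
(recorded on all of `[n]`; only the values on `K` matter). `y` satisfies the clause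
(`C ~ y`) iff it agrees with the signs in some coordinate of `K`. -/
def satClause {n k : ℕ} (c : {K : Finset (Fin n) // K.card = k} × (Fin n → Bool))
    (y : Fin n → Bool) : Prop :=
  ∃ j ∈ c.1.1, y j = c.2 j

instance {n k : ℕ} (c : {K : Finset (Fin n) // K.card = k} × (Fin n → Bool))
    (y : Fin n → Bool) : Decidable (satClause c y) := by
  unfold satClause; infer_instance

/-- The specification of the clause is all-ones on its support. -/
def allOnes {n k : ℕ} (c : {K : Finset (Fin n) // K.card = k} × (Fin n → Bool)) : Prop :=
  ∀ j ∈ c.1.1, c.2 j = true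

instance {n k : ℕ} (c : {K : Finset (Fin n) // K.card = k} × (Fin n → Bool)) :
    Decidable (allOnes c) := by
  unfold allOnes; infer_instance

set_option maxHeartbeats 1600000 in
/-- For `x = 0` and `y` of Hamming weight at least `(1/2-ξ)n`, the conditional probability
`β = Pr(C ~ y | g ≠ 1)` for a random `k`-clause `C` satisfies
`β ≤ (1-2^{-k})·[1 + 2^{-k}(ν - 2^{-k})/(1-2^{-k})²]` with `ν = (1/2+ξ)^k`. -/
theorem conditional_sat_probability_bound {n k : ℕ} (hk : 1 ≤ k) (hkn : k ≤ n)
    (ξ : ℝ) (hξ : 0 ≤ ξ) (y : Fin n → Bool)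
    (hy : (1 / 2 - ξ) * n ≤ ((Finset.univ.filter fun i => y i = true).card : ℝ)) :
    (((Finset.univ :
          Finset ({K : Finset (Fin n) // K.card = k} × (Fin n → Bool))).filter
        (fun c => satClause c y ∧ ¬ allOnes c)).card : ℝ)
        / (((Finset.univ :
            Finset ({K : Finset (Fin n) // K.card = k} × (Fin n → Bool))).filter
          (fun c => ¬ allOnes c)).card : ℝ)
      ≤ (1 - (2 : ℝ) ^ (-(k : ℤ))) *
          (1 + (2 : ℝ) ^ (-(k : ℤ)) * (((1 / 2 + ξ) ^ k - (2 : ℝ) ^ (-(k : ℤ))))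
            / (1 - (2 : ℝ) ^ (-(k : ℤ))) ^ 2) := by
  classical
  set m : ℕ := (Finset.univ.filter fun i => y i = true).card with hm
  set P : ℕ := 2 ^ n with hP
  set Q : ℕ := 2 ^ (n - k) with hQ
  set B : ℕ := Fintype.card {K : Finset (Fin n) // K.card = k} with hBdef
  -- per-K counts
  have hbool : ∀ a b : Bool, (¬ a = b) ↔ b = !a := by decide
  have hcard_univ : (Finset.univ : Finset (Fin n → Bool)).card = P := by
    simp [hP, Finset.card_univ]
  have hA : ∀ K : {K : Finset (Fin n) // K.card = k},
      (Finset.univ.filter fun s : Fin n → Bool => allOnes (K, s)).card = Q := by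
    intro K
    have h1 : (Finset.univ.filter fun s : Fin n → Bool => allOnes (K, s))
        = Finset.univ.filter fun s : Fin n → Bool => ∀ j ∈ K.1, s j = (fun _ => true) j := by
      apply Finset.filter_congr
      intro s _
      simp [allOnes]
    rw [h1, card_forced, K.2]
  have hnotsat : ∀ K : {K : Finset (Fin n) // K.card = k},
      (Finset.univ.filter fun s : Fin n → Bool => ¬ satClause (K, s) y).card = Q := by
    intro K
    have h1 : (Finset.univ.filter fun s : Fin n → Bool => ¬ satClause (K, s) y)
        = Finset.univ.filter fun s : Fin n → Bool => ∀ j ∈ K.1, s j = (fun j => !(y j)) j := by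
      apply Finset.filter_congr
      intro s _
      unfold satClause
      push_neg
      simp only [ne_eq, hbool]
    rw [h1, card_forced, K.2]
  have hsat : ∀ K : {K : Finset (Fin n) // K.card = k},
      (Finset.univ.filter fun s : Fin n → Bool => satClause (K, s) y).card + Q = P := by
    intro K
    rw [← hnotsat K, ← hcard_univ]
    exact Finset.card_filter_add_card_filter_not _
  have hnotA : ∀ K : {K : Finset (Fin n) // K.card = k},
      (Finset.univ.filter fun s : Fin n → Bool => ¬ allOnes (K, s)).card + Q = P := by
    intro K
    rw [← hA K, ← hcard_univ, add_comm]
    exact Finset.card_filter_add_card_filter_not _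
  have hsatA : ∀ K : {K : Finset (Fin n) // K.card = k},
      (Finset.univ.filter fun s : Fin n → Bool => satClause (K, s) y ∧ allOnes (K, s)).card
        = if ∃ j ∈ K.1, y j = true then Q else 0 := by
    intro K
    have h1 : ∀ s : Fin n → Bool,
        (satClause (K, s) y ∧ allOnes (K, s)) ↔
          ((∃ j ∈ K.1, y j = true) ∧ allOnes (K, s)) := by
      intro s
      constructor
      · rintro ⟨⟨j, hj, hyj⟩, hall⟩
        exact ⟨⟨j, hj, by rw [hyj]; exact hall j hj⟩, hall⟩
      · rintro ⟨⟨j, hj, hyj⟩, hall⟩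
        exact ⟨⟨j, hj, by rw [hyj]; exact (hall j hj).symm⟩, hall⟩
    rw [Finset.filter_congr fun s _ => h1 s]
    by_cases hc : ∃ j ∈ K.1, y j = true
    · simp only [hc, if_true, true_and]
      exact hA K
    · simp [hc]
  have hsplit : ∀ K : {K : Finset (Fin n) // K.card = k},
      (Finset.univ.filter fun s : Fin n → Bool => satClause (K, s) y ∧ ¬ allOnes (K, s)).card
        + (Finset.univ.filter fun s : Fin n → Bool => satClause (K, s) y ∧ allOnes (K, s)).card
        = (Finset.univ.filter fun s : Fin n → Bool => satClause (K, s) y).card := by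
    intro K
    rw [← Finset.filter_filter, ← Finset.filter_filter, add_comm]
    exact Finset.card_filter_add_card_filter_not _
  -- global counts
  set M : ℕ := (Finset.univ.filter
    fun K : {K : Finset (Fin n) // K.card = k} => ∃ j ∈ K.1, y j = true).card with hMdef
  set B0 : ℕ := (Finset.univ.filter
    fun K : {K : Finset (Fin n) // K.card = k} => ¬ ∃ j ∈ K.1, y j = true).card with hB0def
  set Nnum : ℕ := ((Finset.univ :
      Finset ({K : Finset (Fin n) // K.card = k} × (Fin n → Bool))).filter
      (fun c => satClause c y ∧ ¬ allOnes c)).card with hNnumdef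
  set Ncomp : ℕ := ((Finset.univ :
      Finset ({K : Finset (Fin n) // K.card = k} × (Fin n → Bool))).filter
      (fun c => ¬ allOnes c)).card with hNcompdef
  have hMB0 : M + B0 = B := by
    rw [hBdef, ← Finset.card_univ]
    exact Finset.card_filter_add_card_filter_not _
  have hNcompEq : Ncomp + B * Q = B * P := by
    rw [hNcompdef, card_filter_prod (fun c => ¬ allOnes c), hBdef, ← Finset.card_univ,
      ← smul_eq_mul, ← Finset.sum_const, ← Finset.sum_add_distrib, ← smul_eq_mul,
      ← Finset.sum_const]
    exact Finset.sum_congr rfl fun K _ => hnotA K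
  have hNnumEq : Nnum + M * Q + B * Q = B * P := by
    have h1 : Nnum + M * Q
        = ∑ K : {K : Finset (Fin n) // K.card = k},
            (Finset.univ.filter fun s : Fin n → Bool => satClause (K, s) y).card := by
      rw [hNnumdef, card_filter_prod (fun c => satClause c y ∧ ¬ allOnes c), hMdef,
        ← smul_eq_mul, ← Finset.sum_const, Finset.sum_filter, ← Finset.sum_add_distrib]
      refine Finset.sum_congr rfl fun K _ => ?_
      rw [← hsatA K]
      exact hsplit K
    rw [h1, hBdef, ← Finset.card_univ, ← smul_eq_mul, ← Finset.sum_const,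
      ← Finset.sum_add_distrib, ← smul_eq_mul, ← Finset.sum_const]
    exact Finset.sum_congr rfl fun K _ => hsat K
  -- identify B and B0 with binomial coefficients
  have hB : B = n.choose k := by
    have h1 : (Finset.univ.filter
        fun K : {K : Finset (Fin n) // K.card = k} => K.1 ⊆ (Finset.univ : Finset (Fin n)))
        = Finset.univ := by
      apply Finset.filter_true_of_mem
      intro K _
      exact Finset.subset_univ _
    have := card_subtype_subsets (n := n) (k := k) (Finset.univ : Finset (Fin n))
    rw [h1] at this
    rw [hBdef, ← Finset.card_univ, this, Finset.card_univ, Fintype.card_fin]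
  have hB0 : B0 = (n - m).choose k := by
    have h1 : (Finset.univ.filter
        fun K : {K : Finset (Fin n) // K.card = k} => ¬ ∃ j ∈ K.1, y j = true)
        = Finset.univ.filter
        fun K : {K : Finset (Fin n) // K.card = k} =>
          K.1 ⊆ (Finset.univ.filter fun i => ¬ y i = true) := by
      apply Finset.filter_congr
      intro K _
      push_neg
      constructor
      · intro h j hj
        simp only [Finset.mem_filter, Finset.mem_univ, true_and]
        exact h j hj
      · intro h j hj
        have := h hj
        simp only [Finset.mem_filter, Finset.mem_univ, true_and] at this
        exact this
    have h2 : (Finset.univ.filter fun i : Fin n => ¬ y i = true).card = n - m := by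
      have := Finset.card_filter_add_card_filter_not
        (s := (Finset.univ : Finset (Fin n))) (p := fun i : Fin n => y i = true)
      rw [Finset.card_univ, Fintype.card_fin] at this
      omega
    rw [hB0def, h1, card_subtype_subsets, h2]
  have hmn : m ≤ n := by
    simpa using Finset.card_filter_le (Finset.univ : Finset (Fin n)) (fun i => y i = true)
  -- key inequality: B0 ≤ ν * B
  set ν : ℝ := (1 / 2 + ξ) ^ k with hν
  have hn1 : 1 ≤ n := hk.trans hkn
  have hkey : (B0 : ℝ) ≤ ν * B := by
    have hnat := choose_mul_pow_le (a := n - m) (n := n) k (Nat.sub_le n m)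
    have hreal : ((n - m).choose k : ℝ) * (n : ℝ) ^ k ≤ (n.choose k : ℝ) * ((n - m : ℕ) : ℝ) ^ k := by
      exact_mod_cast hnat
    have hcast : ((n - m : ℕ) : ℝ) = (n : ℝ) - (m : ℝ) := by
      exact Nat.cast_sub hmn
    have ha : ((n - m : ℕ) : ℝ) ≤ (1 / 2 + ξ) * n := by
      rw [hcast]; rw [hm] at hy ⊢; linarith
    have ha0 : (0 : ℝ) ≤ ((n - m : ℕ) : ℝ) := Nat.cast_nonneg _
    have hpow : ((n - m : ℕ) : ℝ) ^ k ≤ ((1 / 2 + ξ) * n) ^ k := pow_le_pow_left₀ ha0 ha k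
    have hn0 : (0 : ℝ) < (n : ℝ) ^ k := by positivity
    have h3 : ((n - m).choose k : ℝ) * (n : ℝ) ^ k ≤ (ν * (n.choose k : ℝ)) * (n : ℝ) ^ k := by
      calc ((n - m).choose k : ℝ) * (n : ℝ) ^ k
          ≤ (n.choose k : ℝ) * ((n - m : ℕ) : ℝ) ^ k := hreal
        _ ≤ (n.choose k : ℝ) * ((1 / 2 + ξ) * n) ^ k :=
            mul_le_mul_of_nonneg_left hpow (Nat.cast_nonneg _)
        _ = (ν * (n.choose k : ℝ)) * (n : ℝ) ^ k := by rw [hν, mul_pow]; ring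
    have := le_of_mul_le_mul_right h3 hn0
    rw [hB0, hB]
    exact this
  -- pass to the reals
  set p : ℝ := (2 : ℝ) ^ (-(k : ℤ)) with hp
  have hpinv : p = ((2 : ℝ) ^ k)⁻¹ := by
    rw [hp, zpow_neg, zpow_natCast]
  have hp0 : 0 < p := by rw [hpinv]; positivity
  have hphalf : p ≤ 1 / 2 := by
    rw [hpinv]
    rw [inv_le_comm₀ (by positivity) (by norm_num)]
    calc (1 / 2 : ℝ)⁻¹ = 2 ^ 1 := by norm_num
      _ ≤ 2 ^ k := by
        apply pow_le_pow_right₀ (by norm_num) hk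
  have h1p : (0 : ℝ) < 1 - p := by linarith
  have hQP : (Q : ℝ) = (P : ℝ) * p := by
    rw [hQ, hP, hpinv]
    push_cast
    rw [eq_mul_inv_iff_mul_eq₀ (by positivity), ← pow_add, Nat.sub_add_cancel hkn]
  have e1 : (Nnum : ℝ) + (M : ℝ) * Q + (B : ℝ) * Q = (B : ℝ) * P := by exact_mod_cast hNnumEq
  have e2 : (Ncomp : ℝ) + (B : ℝ) * Q = (B : ℝ) * P := by exact_mod_cast hNcompEq
  have e3 : (M : ℝ) + (B0 : ℝ) = (B : ℝ) := by exact_mod_cast hMB0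
  have eNnum : (Nnum : ℝ) = (B : ℝ) * P * (1 - 2 * p) + (B0 : ℝ) * ((P : ℝ) * p) := by
    rw [hQP] at e1
    linear_combination e1 - (P : ℝ) * p * e3
  have eNcomp : (Ncomp : ℝ) = (B : ℝ) * P * (1 - p) := by
    rw [hQP] at e2
    linear_combination e2
  have hB1 : (1 : ℝ) ≤ (B : ℝ) := by
    have : 0 < n.choose k := Nat.choose_pos hkn
    rw [hB]
    exact_mod_cast this
  have hP0 : (0 : ℝ) < (P : ℝ) := by
    rw [hP]; positivity
  have hNcompPos : (0 : ℝ) < (Ncomp : ℝ) := by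
    rw [eNcomp]
    have : (0:ℝ) < (B:ℝ) := by linarith
    positivity
  rw [div_le_iff₀ hNcompPos, eNnum, eNcomp]
  have hexpand : (1 - p) * (1 + p * (ν - p) / (1 - p) ^ 2) * ((B : ℝ) * P * (1 - p))
      = (B : ℝ) * P * ((1 - p) ^ 2 + p * (ν - p)) := by
    field_simp
  rw [hexpand]
  nlinarith [mul_nonneg (mul_nonneg hP0.le hp0.le) (sub_nonneg.mpr hkey)]
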